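/- Let k be a field and q a nondegenerate quadratic form over k in three variables (defining a smooth conic C in P^2). If q has a nontrivial zero over a field extension L/k of odd degree, then q has a nontrivial zero over k (Springer's theorem in the rank-3 case), and hence C is isomorphic to P^1 over k. -/

import Mathlib

/-!
Springer's argument. Work with a matrix `M` representing the form, and suppose it is
anisotropic over `k`. Then it stays anisotropic over `k[X]/(h)` for every irreducible `h` of
odd degree, by induction on `deg h`: an isotropic vector lifts to a primitive polynomial
vector `r` with `deg rᵢ < deg h` and `h ∣ Q(r)`; anisotropy over `k` makes the top
coefficient of `Q(r)` nonzero, so `deg Q(r)` is even and `Q(r) / h` has odd degree `< deg h`,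
hence an irreducible factor `h'` of odd degree, modulo which `r` is a smaller isotropic
vector. An odd-degree extension is built from `k` by adjoining elements one at a time, each
step simple of odd degree.
-/

open scoped TensorProduct

open Polynomial IntermediateField

namespace Polynomial

theorem exists_irreducible_dvd_of_odd_natDegree {R : Type*} [CommRing R] [IsDomain R]
    [WfDvdMonoid R[X]] {g : R[X]} (hg : Odd g.natDegree) :
    ∃ h, Irreducible h ∧ Odd h.natDegree ∧ h ∣ g := by
  induction g using WfDvdMonoid.induction_on_irreducible with
  | zero => simp at hg
  | unit u hu => simp [natDegree_eq_zero_of_isUnit hu] at hg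
  | mul a i ha hi ih =>
    rw [natDegree_mul hi.ne_zero ha, Nat.odd_add'] at hg
    by_cases hi' : Odd i.natDegree
    · exact ⟨i, hi, hi', dvd_mul_right i a⟩
    · obtain ⟨h, hh, hodd, hdvd⟩ := ih (hg.mpr (Nat.not_odd_iff_even.mp hi'))
      exact ⟨h, hh, hodd, hdvd.mul_left i⟩

theorem exists_natDegree_le_and_coeff_ne_zero {R : Type*} [Semiring R] {ι : Type*} [Finite ι]
    {p : ι → R[X]} (hp : p ≠ 0) :
    ∃ d, (∀ i, (p i).natDegree ≤ d) ∧ (fun i => (p i).coeff d) ≠ 0 := by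
  obtain ⟨j, hj⟩ := Function.ne_iff.mp hp
  have : Nonempty {i // p i ≠ 0} := ⟨⟨j, hj⟩⟩
  obtain ⟨⟨i, hi⟩, hmax⟩ := Finite.exists_max fun i : {i // p i ≠ 0} => (p i).natDegree
  refine ⟨(p i).natDegree, fun k => ?_, Function.ne_iff.mpr ⟨i, by simpa using hi⟩⟩
  by_cases hk : p k = 0
  · simp [hk]
  · exact hmax ⟨k, hk⟩

end Polynomial

namespace Matrix

variable {ι : Type*} [Fintype ι] [DecidableEq ι]

section CommRing

variable {R S : Type*} [CommRing R] [CommRing S]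

theorem toQuadraticForm'_apply (M : Matrix ι ι R) (v : ι → R) :
    M.toQuadraticForm' v = ∑ i, ∑ j, M i j * v i * v j := by
  simp only [toQuadraticForm', LinearMap.BilinMap.toQuadraticMap_apply, toLinearMap₂'_apply,
    smul_eq_mul]
  exact Finset.sum_congr rfl fun _ _ => Finset.sum_congr rfl fun _ _ => by ring

theorem toQuadraticForm'_map (f : R →+* S) (M : Matrix ι ι R) (v : ι → R) :
    (M.map f).toQuadraticForm' (f ∘ v) = f (M.toQuadraticForm' v) := by
  simp [toQuadraticForm'_apply, map_sum]

theorem exists_toQuadraticForm'_eq (q : QuadraticForm R (ι → R)) :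
    ∃ M : Matrix ι ι R, M.toQuadraticForm' = q := by
  obtain ⟨B, rfl⟩ := LinearMap.BilinMap.toQuadraticMap_surjective q
  exact ⟨LinearMap.toMatrix₂' R B, by rw [toQuadraticForm', toLinearMap₂'_toMatrix']⟩

theorem baseChange_toQuadraticForm' [Algebra R S] [Invertible (2 : R)] (M : Matrix ι ι R) :
    M.toQuadraticForm'.baseChange S =
      (M.map (algebraMap R S)).toQuadraticForm'.comp
        (TensorProduct.piScalarRight R S S ι).toLinearMap := by
  ext v
  simp only [QuadraticForm.baseChange_tmul, mul_one, Algebra.smul_def, QuadraticMap.comp_apply,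
    LinearEquiv.coe_coe, TensorProduct.piScalarRight_apply, TensorProduct.piScalarRightHom_tmul]
  exact (toQuadraticForm'_map (algebraMap R S) M v).symm

theorem natDegree_toQuadraticForm'_map_C_le (M : Matrix ι ι R) {p : ι → R[X]} {d : ℕ}
    (hp : ∀ i, (p i).natDegree ≤ d) : ((M.map C).toQuadraticForm' p).natDegree ≤ d + d := by
  rw [toQuadraticForm'_apply]
  refine natDegree_sum_le_of_forall_le _ _ fun i _ =>
    natDegree_sum_le_of_forall_le _ _ fun j _ => ?_
  rw [map_apply, mul_assoc]
  exact (natDegree_C_mul_le _ _).trans (natDegree_mul_le_of_le (hp i) (hp j))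

theorem coeff_toQuadraticForm'_map_C (M : Matrix ι ι R) {p : ι → R[X]} {d : ℕ}
    (hp : ∀ i, (p i).natDegree ≤ d) :
    ((M.map C).toQuadraticForm' p).coeff (d + d) = M.toQuadraticForm' fun i => (p i).coeff d := by
  simp only [toQuadraticForm'_apply, finsetSum_coeff, map_apply, mul_assoc, coeff_C_mul,
    coeff_mul_add_eq_of_natDegree_le (hp _) (hp _)]

end CommRing

section Field

variable {F : Type*} [Field F] {M : Matrix ι ι F}

theorem dvd_toQuadraticForm'_map_C_mod {h : F[X]} {p : ι → F[X]}
    (hdvd : h ∣ (M.map C).toQuadraticForm' p) :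
    h ∣ (M.map C).toQuadraticForm' fun i => p i % h := by
  have hmod : AdjoinRoot.mk h ∘ (fun i => p i % h) = AdjoinRoot.mk h ∘ p := by
    ext i
    exact AdjoinRoot.mk_eq_mk.mpr ⟨-(p i / h), by
      show p i % h - p i = _; rw [EuclideanDomain.mod_eq_sub_mul_div]; ring⟩
  rw [← AdjoinRoot.mk_eq_zero, ← toQuadraticForm'_map, hmod, toQuadraticForm'_map,
    AdjoinRoot.mk_eq_zero.mpr hdvd]

theorem exists_primitive_dvd_toQuadraticForm'_map_C {h : F[X]} (hh : Irreducible h)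
    {p : ι → F[X]} (hp : ¬ ∀ i, h ∣ p i) (hdvd : h ∣ (M.map C).toQuadraticForm' p) :
    ∃ r : ι → F[X], (∀ g, (∀ i, g ∣ r i) → IsUnit g) ∧ (∀ i, (r i).natDegree < h.natDegree) ∧
      h ∣ (M.map C).toQuadraticForm' r := by
  classical
  push Not at hp
  obtain ⟨i₀, hi₀⟩ := hp
  set s : ι → F[X] := fun i => p i % h
  obtain ⟨r, hsr, hr⟩ := Finset.extract_gcd s ⟨i₀, Finset.mem_univ _⟩
  set G := Finset.univ.gcd s
  have hG : ¬ h ∣ G := fun hG => hi₀ <| (EuclideanDomain.dvd_mod_iff dvd_rfl).mp <|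
    hG.trans (Finset.gcd_dvd (Finset.mem_univ i₀))
  have hG0 : G ≠ 0 := fun h0 => hG (h0 ▸ dvd_zero h)
  have hs : s = G • r := funext fun i => hsr i (Finset.mem_univ i)
  refine ⟨r, fun g hg => isUnit_of_dvd_one (hr ▸ Finset.dvd_gcd fun i _ => hg i), fun i => ?_, ?_⟩
  · by_cases hri : r i = 0
    · simpa [hri] using hh.natDegree_pos
    calc (r i).natDegree ≤ (s i).natDegree := by
          rw [hs, Pi.smul_apply, smul_eq_mul, natDegree_mul hG0 hri]
          exact Nat.le_add_left ..
      _ < h.natDegree := natDegree_mod_lt _ hh.natDegree_pos.ne'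
  · have hs_dvd : h ∣ (M.map C).toQuadraticForm' s := dvd_toQuadraticForm'_map_C_mod hdvd
    rw [hs, QuadraticMap.map_smul, smul_eq_mul] at hs_dvd
    exact (hh.prime.dvd_or_dvd hs_dvd).resolve_left fun hGG =>
      hG (hh.prime.dvd_of_dvd_pow (n := 2) (by rwa [sq]))

theorem exists_irreducible_dvd_toQuadraticForm'_map_C (hQ : M.toQuadraticForm'.Anisotropic)
    {h : F[X]} (hh : Irreducible h) (hodd : Odd h.natDegree) {r : ι → F[X]}
    (hr : ∀ g, (∀ i, g ∣ r i) → IsUnit g) (hdeg : ∀ i, (r i).natDegree < h.natDegree)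
    (hdvd : h ∣ (M.map C).toQuadraticForm' r) :
    ∃ h', Irreducible h' ∧ Odd h'.natDegree ∧ h'.natDegree < h.natDegree ∧
      (¬ ∀ i, h' ∣ r i) ∧ h' ∣ (M.map C).toQuadraticForm' r := by
  have hr0 : r ≠ 0 := fun h0 => hh.not_isUnit (hr h (by simp [h0]))
  obtain ⟨d, hd, hw⟩ := exists_natDegree_le_and_coeff_ne_zero hr0
  obtain ⟨i, hi⟩ := Function.ne_iff.mp hw
  have hdh : d < h.natDegree := (le_natDegree_of_ne_zero hi).trans_lt (hdeg i)
  have hcoeff : ((M.map C).toQuadraticForm' r).coeff (d + d) ≠ 0 := by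
    rw [M.coeff_toQuadraticForm'_map_C hd]
    exact fun h0 => hw (hQ _ h0)
  have hP : ((M.map C).toQuadraticForm' r).natDegree = d + d :=
    (M.natDegree_toQuadraticForm'_map_C_le hd).antisymm (le_natDegree_of_ne_zero hcoeff)
  obtain ⟨g, hg⟩ := hdvd
  have hg0 : g ≠ 0 := by
    rintro rfl
    rw [hg, mul_zero, coeff_zero] at hcoeff
    exact hcoeff rfl
  have hdeg_sum : h.natDegree + g.natDegree = d + d := by
    rw [← hP, hg, natDegree_mul hh.ne_zero hg0]
  have hg_odd : Odd g.natDegree := by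
    obtain ⟨k, hk⟩ := hodd
    exact ⟨d - k - 1, by omega⟩
  obtain ⟨h', hh', hodd', hdvd'⟩ := exists_irreducible_dvd_of_odd_natDegree hg_odd
  refine ⟨h', hh', hodd', ?_, fun hall => hh'.not_isUnit (hr h' hall), hg ▸ hdvd'.mul_left h⟩
  calc h'.natDegree ≤ g.natDegree := natDegree_le_of_dvd hdvd' hg0
    _ < h.natDegree := by omega

theorem forall_dvd_of_dvd_toQuadraticForm'_map_C (hQ : M.toQuadraticForm'.Anisotropic)
    {h : F[X]} (hh : Irreducible h) (hodd : Odd h.natDegree) {p : ι → F[X]}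
    (hdvd : h ∣ (M.map C).toQuadraticForm' p) : ∀ i, h ∣ p i := by
  induction hn : h.natDegree using Nat.strong_induction_on generalizing h p with
  | _ n ih =>
  by_contra hp
  obtain ⟨r, hr, hdeg, hdvd⟩ := exists_primitive_dvd_toQuadraticForm'_map_C hh hp hdvd
  obtain ⟨h', hh', hodd', hlt, hr', hdvd'⟩ :=
    exists_irreducible_dvd_toQuadraticForm'_map_C hQ hh hodd hr hdeg hdvd
  exact hr' (ih _ (hn ▸ hlt) hh' hodd' hdvd' rfl)

theorem eq_zero_of_mem_adjoin_simple {E : Type*} [Field E] [Algebra F E]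
    (hQ : M.toQuadraticForm'.Anisotropic) {a : E} (ha : IsIntegral F a)
    (hodd : Odd (minpoly F a).natDegree) {v : ι → E} (hv : ∀ i, v i ∈ F⟮a⟯)
    (hv0 : (M.map (algebraMap F E)).toQuadraticForm' v = 0) : v = 0 := by
  have hlift : ∀ i, ∃ p : F[X], aeval a p = v i := fun i => by
    have := hv i
    rwa [← mem_toSubalgebra, adjoin_simple_toSubalgebra_of_isAlgebraic ha.isAlgebraic,
      Algebra.adjoin_singleton_eq_range_aeval] at this
  choose p hp using hlift
  have hmap :
      (M.map C).map ((aeval a : F[X] →ₐ[F] E) : F[X] →+* E) = M.map (algebraMap F E) := by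
    ext i j; simp
  have hpv : ((aeval a : F[X] →ₐ[F] E) : F[X] →+* E) ∘ p = v := funext hp
  have hdvd : minpoly F a ∣ (M.map C).toQuadraticForm' p := by
    refine minpoly.dvd F a ?_
    rw [← AlgHom.coe_toRingHom, ← toQuadraticForm'_map, hmap, hpv, hv0]
  funext i
  obtain ⟨q, hq⟩ := forall_dvd_of_dvd_toQuadraticForm'_map_C hQ (minpoly.irreducible ha) hodd hdvd i
  rw [← hp, hq, map_mul, minpoly.aeval, zero_mul, Pi.zero_apply]

theorem anisotropic_toQuadraticForm'_map_of_odd_finrank {E : Type*} [Field E] [Algebra F E]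
    [FiniteDimensional F E] (hQ : M.toQuadraticForm'.Anisotropic)
    (hodd : Odd (Module.finrank F E)) : (M.map (algebraMap F E)).toQuadraticForm'.Anisotropic := by
  suffices ∀ K : IntermediateField F E, Odd (Module.finrank F K) → ∀ v : ι → E, (∀ i, v i ∈ K) →
      (M.map (algebraMap F E)).toQuadraticForm' v = 0 → v = 0 from
    fun v hv => this ⊤ (by rwa [finrank_top']) v (fun _ => mem_top) hv
  intro K
  induction K using IntermediateField.induction_on_adjoin with
  | base =>
    intro _ v hv hv0
    choose u hu using fun i => mem_bot.mp (hv i)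
    obtain rfl : algebraMap F E ∘ u = v := funext hu
    rw [toQuadraticForm'_map, map_eq_zero_iff _ (algebraMap F E).injective] at hv0
    rw [hQ u hv0]; ext; simp
  | ih K x ih =>
    intro hodd v hv hv0
    change Odd (Module.finrank F K⟮x⟯) at hodd
    rw [← Module.finrank_mul_finrank F K K⟮x⟯, Nat.odd_mul,
      adjoin.finrank (IsIntegral.of_finite K x)] at hodd
    have hMK : (M.map (algebraMap F K)).map (algebraMap K E) = M.map (algebraMap F E) := by
      rw [Matrix.map_map, ← RingHom.coe_comp, ← IsScalarTower.algebraMap_eq]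
    have hQK : (M.map (algebraMap F K)).toQuadraticForm'.Anisotropic := fun u hu => by
      have := ih hodd.1 (algebraMap K E ∘ u) (fun i => (u i).2)
        (by rw [← hMK, toQuadraticForm'_map, hu, map_zero])
      exact funext fun i => (algebraMap K E).injective (congrFun this i)
    exact eq_zero_of_mem_adjoin_simple hQK (IsIntegral.of_finite K x) hodd.2 hv (hMK ▸ hv0)

end Field

end Matrix

theorem rank_three_springer_general
    (k L : Type*) [Field k] [Field L] [Algebra k L] [Invertible (2 : k)]
    [FiniteDimensional k L] (hodd : Odd (Module.finrank k L))
    (q : QuadraticForm k (Fin 3 → k))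
    (hL : ∃ v : L ⊗[k] (Fin 3 → k), v ≠ 0 ∧ QuadraticForm.baseChange L q v = 0) :
    ∃ v : Fin 3 → k, v ≠ 0 ∧ q v = 0 := by
  obtain ⟨M, rfl⟩ := Matrix.exists_toQuadraticForm'_eq q
  rw [← QuadraticMap.not_anisotropic_iff_exists] at hL ⊢
  refine fun hQ => hL fun v hv => ?_
  rw [Matrix.baseChange_toQuadraticForm'] at hv
  exact (TensorProduct.piScalarRight k L L (Fin 3)).map_eq_zero_iff.mp
    (Matrix.anisotropic_toQuadraticForm'_map_of_odd_finrank hQ hodd _ hv)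

/-- Springer's theorem in the rank-3 case: let `k` be a field of characteristic
not `2` (encoded by `Invertible (2 : k)`), and let `q` be a nondegenerate quadratic form in three
variables over `k`. If `q` acquires a nontrivial zero over a finite field extension `L/k` of odd
degree, then `q` already has a nontrivial zero over `k` (so the associated smooth conic
`C ⊆ ℙ²` has a `k`-rational point and is isomorphic to `ℙ¹` over `k`). -/
theorem rank_three_springer
    (k L : Type*) [Field k] [Field L] [Algebra k L] [Invertible (2 : k)]
    [FiniteDimensional k L] (hodd : Odd (Module.finrank k L))
    (q : QuadraticForm k (Fin 3 → k))
    (hq : (QuadraticMap.polarBilin q).Nondegenerate)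
    (hL : ∃ v : L ⊗[k] (Fin 3 → k), v ≠ 0 ∧ QuadraticForm.baseChange L q v = 0) :
    ∃ v : Fin 3 → k, v ≠ 0 ∧ q v = 0 :=
  rank_three_springer_general k L hodd q hL
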